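/- arXiv:2110.04114 — 3 statements merged into one kernel-verified Lean document; each statement's English description precedes it below -/
import Mathlib

section
/- Let Φ(z) = νz + d for all z ∈ ℂ with |ν| ≤ 1, and suppose the composition operator C_Φ is bounded on H_E(ζ). Then C_Φ is self-adjoint if and only if d = 0 and ν is a real number. -/
open Filter ContinuousLinearMap
open scoped ComplexConjugate

noncomputable section

/-- The weighted Hardy space of entire functions `H_E(ζ)`, realized as the Hilbert space of
coefficient sequences: an entire function `g z = ∑ bₙ zⁿ` with `∑ |bₙ|² ζₙ² < ∞` is encoded by
the `ℓ²`-sequence `n ↦ bₙ * ζₙ`.  With this identification the `lp`-inner product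
`⟪f, g⟫ = ∑ conj (f n) * g n` is exactly `∑ conj bₙ * cₙ * ζₙ²` (Mathlib's convention:
conjugate-linear in the first variable). -/
abbrev HE (_ζ : ℕ → ℝ) : Type := lp (fun _ : ℕ => ℂ) 2

/-- The `n`-th Taylor coefficient `bₙ` of an element of `H_E(ζ)`. -/
def HE.coeff (ζ : ℕ → ℝ) (f : HE ζ) (n : ℕ) : ℂ := f n / (ζ n : ℂ)

/-- The entire function `z ↦ ∑ bₙ zⁿ` represented by an element of `H_E(ζ)`. -/
def HE.toFun (ζ : ℕ → ℝ) (f : HE ζ) : ℂ → ℂ := fun z => ∑' n, HE.coeff ζ f n * z ^ n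

/-!
Since `ζₙ^{1/n} → ∞`, the Taylor series of every element of `H_E(ζ)` has infinite radius, so an
element is determined by the entire function it represents. Hence `C_Φ` is pinned down by the
functional equation: it fixes the constant `e₀`, and for `d = 0` it scales `e₁` by `ν` and acts
on coefficients as `bₙ ↦ νⁿ bₙ`, whose adjoint is `bₙ ↦ ν̄ⁿ bₙ`. Self-adjointness tested on
`⟪C_Φ e₀, e₁⟫` forces `d = 0`, and on `⟪C_Φ e₁, e₁⟫` forces `ν = ν̄`.
-/

open FormalMultilinearSeries

lemma eventually_pow_le_of_tendsto_rpow_one_div {ζ : ℕ → ℝ} (hζ : ∀ n, 0 ≤ ζ n)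
    (hlim : Tendsto (fun n : ℕ => ζ n ^ ((1 : ℝ) / n)) atTop atTop) {r : ℝ} (hr : 0 ≤ r) :
    ∀ᶠ n in atTop, r ^ n ≤ ζ n := by
  filter_upwards [hlim.eventually_ge_atTop r, eventually_ne_atTop 0] with n hn hn0
  calc r ^ n ≤ (ζ n ^ ((1 : ℝ) / n)) ^ n := pow_le_pow_left₀ hr hn n
    _ = ζ n := by rw [one_div, Real.rpow_inv_natCast_pow (hζ n) hn0]

lemma radius_ofScalars_eq_top_of_norm_mul_le {𝕜 : Type*} (E : Type*) [NontriviallyNormedField 𝕜]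
    [NormedRing E] [NormedAlgebra 𝕜 E] [NormOneClass E] {ζ : ℕ → ℝ} (hζ : ∀ n, 0 ≤ ζ n)
    (hlim : Tendsto (fun n : ℕ => ζ n ^ ((1 : ℝ) / n)) atTop atTop) {a : ℕ → 𝕜} {C : ℝ}
    (ha : ∀ n, ‖a n‖ * ζ n ≤ C) :
    (ofScalars E a).radius = ⊤ := by
  refine ENNReal.eq_top_of_forall_nnreal_le fun r => le_radius_of_eventually_le _ C ?_
  filter_upwards [eventually_pow_le_of_tendsto_rpow_one_div hζ hlim r.coe_nonneg] with n hn
  rw [ofScalars_norm]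
  exact (mul_le_mul_of_nonneg_left hn (norm_nonneg _)).trans (ha n)

namespace HE

variable {ζ : ℕ → ℝ}

lemma norm_coeff_mul_le (hζ : ∀ n, 0 < ζ n) (f : HE ζ) (n : ℕ) :
    ‖coeff ζ f n‖ * ζ n ≤ ‖f‖ := by
  rw [coeff, norm_div, Complex.norm_real, Real.norm_of_nonneg (hζ n).le,
    div_mul_cancel₀ _ (hζ n).ne']
  exact lp.norm_apply_le_norm two_ne_zero f n

lemma hasFPowerSeriesAt_toFun (hζ : ∀ n, 0 < ζ n)
    (hlim : Tendsto (fun n : ℕ => ζ n ^ ((1 : ℝ) / n)) atTop atTop) (f : HE ζ) :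
    HasFPowerSeriesAt (toFun ζ f) (ofScalars ℂ (coeff ζ f)) 0 := by
  have hrad := radius_ofScalars_eq_top_of_norm_mul_le ℂ (fun n => (hζ n).le) hlim
    (norm_coeff_mul_le hζ f)
  convert ((ofScalars ℂ (coeff ζ f)).hasFPowerSeriesOnBall
    (hrad ▸ ENNReal.zero_lt_top)).hasFPowerSeriesAt using 1
  funext z
  simp only [toFun, FormalMultilinearSeries.sum, ofScalars_apply_eq, smul_eq_mul]

lemma coeff_injective (hζ : ∀ n, ζ n ≠ 0) : Function.Injective (coeff ζ) := fun _ _ h =>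
  lp.ext <| funext fun n => (div_left_inj' (Complex.ofReal_ne_zero.mpr (hζ n))).mp (congrFun h n)

lemma toFun_injective (hζ : ∀ n, 0 < ζ n)
    (hlim : Tendsto (fun n : ℕ => ζ n ^ ((1 : ℝ) / n)) atTop atTop) :
    Function.Injective (toFun ζ) := fun f g h =>
  coeff_injective (fun n => (hζ n).ne') <| ofScalars_series_injective ℂ ℂ <|
    (hasFPowerSeriesAt_toFun hζ hlim f).eq_formalMultilinearSeries
      (h ▸ hasFPowerSeriesAt_toFun hζ hlim g)

lemma toFun_apply_zero (f : HE ζ) : toFun ζ f 0 = coeff ζ f 0 := by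
  rw [toFun, tsum_eq_single 0 fun n hn => by simp [hn]]
  simp

lemma toFun_smul (c : ℂ) (f : HE ζ) (z : ℂ) : toFun ζ (c • f) z = c * toFun ζ f z := by
  simp only [toFun, coeff, lp.coeFn_smul, Pi.smul_apply, smul_eq_mul, mul_div_assoc, mul_assoc,
    tsum_mul_left]

lemma toFun_single (k : ℕ) (z : ℂ) :
    toFun ζ (lp.single 2 k 1) z = (ζ k : ℂ)⁻¹ * z ^ k := by
  rw [toFun, tsum_eq_single k fun n hn => by simp [coeff, lp.single_apply, hn]]
  simp [coeff]

def dilation (ν : ℂ) (hν : ‖ν‖ ≤ 1) (f : HE ζ) : HE ζ :=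
  ⟨fun n => ν ^ n * f n, (lp.memℓp f).mono' fun n => by
    rw [norm_mul, norm_pow]
    exact mul_le_of_le_one_left (norm_nonneg _) (pow_le_one₀ (norm_nonneg _) hν)⟩

lemma toFun_dilation (ν : ℂ) (hν : ‖ν‖ ≤ 1) (f : HE ζ) (z : ℂ) :
    toFun ζ (dilation ν hν f) z = toFun ζ f (ν * z) :=
  tsum_congr fun n => by simp only [coeff, dilation, mul_pow]; ring

lemma inner_dilation_left (ν : ℂ) (hν : ‖ν‖ ≤ 1) (f g : HE ζ) :
    inner ℂ (dilation ν hν f) g =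
      inner ℂ f (dilation (conj ν) (by rwa [Complex.norm_conj]) g) := by
  simp only [lp.inner_eq_tsum, RCLike.inner_apply]
  exact tsum_congr fun n => by simp only [dilation, map_mul, map_pow]; ring

section Affine

variable {ν d : ℂ} {T : HE ζ →L[ℂ] HE ζ}

lemma apply_single_zero_of_toFun (hζ : ∀ n, 0 < ζ n)
    (hlim : Tendsto (fun n : ℕ => ζ n ^ ((1 : ℝ) / n)) atTop atTop)
    (hT : ∀ f : HE ζ, ∀ z : ℂ, toFun ζ (T f) z = toFun ζ f (ν * z + d)) :
    T (lp.single 2 0 1) = lp.single 2 0 1 :=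
  toFun_injective hζ hlim <| funext fun z => by simp only [hT, toFun_single, pow_zero]

lemma eq_zero_of_isSelfAdjoint_of_toFun (hζ : ∀ n, 0 < ζ n)
    (hlim : Tendsto (fun n : ℕ => ζ n ^ ((1 : ℝ) / n)) atTop atTop)
    (hT : ∀ f : HE ζ, ∀ z : ℂ, toFun ζ (T f) z = toFun ζ f (ν * z + d))
    (hsa : IsSelfAdjoint T) : d = 0 := by
  have hT10 : T (lp.single 2 1 1) 0 = 0 := by
    have hsym := hsa.isSymmetric (lp.single 2 0 1) (lp.single 2 1 1)
    simpa [apply_single_zero_of_toFun hζ hlim hT, lp.inner_single_left] using hsym.symm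
  have h0 : toFun ζ (T (lp.single 2 1 1)) 0 = 0 := by
    rw [toFun_apply_zero, coeff, hT10, zero_div]
  rw [hT, toFun_single, mul_zero, zero_add, pow_one] at h0
  exact (mul_eq_zero.mp h0).resolve_left (by simpa using (hζ 1).ne')

lemma apply_eq_dilation_of_toFun (hζ : ∀ n, 0 < ζ n)
    (hlim : Tendsto (fun n : ℕ => ζ n ^ ((1 : ℝ) / n)) atTop atTop) (hν : ‖ν‖ ≤ 1)
    (hT : ∀ f : HE ζ, ∀ z : ℂ, toFun ζ (T f) z = toFun ζ f (ν * z)) (f : HE ζ) :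
    T f = dilation ν hν f :=
  toFun_injective hζ hlim <| funext fun z => by rw [hT, toFun_dilation]

lemma apply_single_one_of_toFun (hζ : ∀ n, 0 < ζ n)
    (hlim : Tendsto (fun n : ℕ => ζ n ^ ((1 : ℝ) / n)) atTop atTop)
    (hT : ∀ f : HE ζ, ∀ z : ℂ, toFun ζ (T f) z = toFun ζ f (ν * z)) :
    T (lp.single 2 1 1) = ν • lp.single 2 1 1 :=
  toFun_injective hζ hlim <| funext fun z => by
    simp only [hT, toFun_smul, toFun_single, pow_one]
    ring

end Affine

end HE

/-- For `Φ z = ν z + d` with `|ν| ≤ 1` inducing a bounded composition operator on `H_E(ζ)`,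
`C_Φ` is self-adjoint iff `d = 0` and `ν` is a real number. -/
theorem composition_selfAdjoint_iff
    (ζ : ℕ → ℝ) (hζ : ∀ n, 0 < ζ n)
    (hlim : Tendsto (fun n : ℕ => (ζ n) ^ ((1 : ℝ) / n)) atTop atTop)
    (ν d : ℂ) (hν : ‖ν‖ ≤ 1)
    (T : HE ζ →L[ℂ] HE ζ)
    (hT : ∀ f : HE ζ, ∀ z : ℂ, HE.toFun ζ (T f) z = HE.toFun ζ f (ν * z + d)) :
    IsSelfAdjoint T ↔ d = 0 ∧ ∃ r : ℝ, ν = (r : ℂ) := by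
  constructor
  · intro hsa
    obtain rfl := HE.eq_zero_of_isSelfAdjoint_of_toFun hζ hlim hT hsa
    simp only [add_zero] at hT
    refine ⟨rfl, Complex.conj_eq_iff_real.mp ?_⟩
    have hsym := hsa.isSymmetric (lp.single 2 1 1) (lp.single 2 1 1)
    simpa [HE.apply_single_one_of_toFun hζ hlim hT, inner_smul_left, inner_smul_right,
      lp.inner_single_left] using hsym
  · rintro ⟨rfl, r, rfl⟩
    simp only [add_zero] at hT
    refine isSelfAdjoint_iff_isSymmetric.mpr fun f g => ?_
    simp only [coe_coe, HE.apply_eq_dilation_of_toFun hζ hlim hν hT, HE.inner_dilation_left,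
      Complex.conj_ofReal]
end
end

section
/- Let Φ(z) = νz for all z ∈ ℂ with |ν| ≤ 1 and let Υ be an entire function on ℂ such that C_{Υ,Φ} is bounded on H_E(ζ). Then C_{Υ,Φ} is a co-isometry if and only if |ν| = 1 and Υ is the constant function Υ(z) = 1/\overline{Υ(0)} for all z ∈ ℂ with |Υ(z)| = 1. -/
open Filter ContinuousLinearMap
open scoped ComplexConjugate

noncomputable section

/-!
Under the growth condition on `ζ` every element of `HE ζ` is the Taylor series of an entire
function, so the identity `T f = Υ · (f ∘ (ν ·))` pins `T` down coefficientwise. Evaluating it at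
`0` shows that `T*` maps `e₀` to `conj (Υ 0) • e₀`; applying `T T* = 1` to `e₀` then forces
`Υ · conj (Υ 0) = 1`, so `Υ` is constant. For a constant symbol `c`, `T` is the diagonal operator
`eₙ ↦ c νⁿ eₙ`, and a diagonal operator is a co-isometry exactly when all its diagonal entries
have modulus one, i.e. when `‖c‖ = ‖ν‖ = 1`.
-/

section DiagonalOperators

variable {ι 𝕜 : Type*} [RCLike 𝕜] [DecidableEq ι]

theorem lp.adjoint_single_of_apply_eq_mul (T : lp (fun _ : ι => 𝕜) 2 →L[𝕜] lp (fun _ : ι => 𝕜) 2)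
    {i : ι} {a : 𝕜} (hT : ∀ g, T g i = a * g i) :
    adjoint T (lp.single 2 i 1) = lp.single 2 i (conj a) :=
  ext_inner_right 𝕜 fun g => by
    rw [adjoint_inner_left, lp.inner_single_left, lp.inner_single_left, hT]
    simp [RCLike.inner_apply, mul_comm]

theorem lp.adjoint_apply_of_apply_eq_mul (T : lp (fun _ : ι => 𝕜) 2 →L[𝕜] lp (fun _ : ι => 𝕜) 2)
    {a : ι → 𝕜} (hT : ∀ g i, T g i = a i * g i) (g : lp (fun _ : ι => 𝕜) 2) (i : ι) :
    adjoint T g i = conj (a i) * g i := by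
  have hTi : T (lp.single 2 i 1) = lp.single 2 i (a i) := by
    ext j
    rw [hT]
    rcases eq_or_ne j i with rfl | hji
    · simp
    · simp [hji]
  have h := adjoint_inner_right T (lp.single 2 i 1) g
  rw [hTi, lp.inner_single_left, lp.inner_single_left] at h
  simpa [RCLike.inner_apply, mul_comm] using h

theorem lp.comp_adjoint_eq_id_iff_of_apply_eq_mul
    (T : lp (fun _ : ι => 𝕜) 2 →L[𝕜] lp (fun _ : ι => 𝕜) 2)
    {a : ι → 𝕜} (hT : ∀ g i, T g i = a i * g i) :
    T.comp (adjoint T) = ContinuousLinearMap.id 𝕜 _ ↔ ∀ i, ‖a i‖ = 1 := by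
  have hTT : ∀ g i, T (adjoint T g) i = (‖a i‖ : 𝕜) ^ 2 * g i := fun g i => by
    rw [hT, lp.adjoint_apply_of_apply_eq_mul T hT, ← mul_assoc, RCLike.mul_conj]
  constructor
  · intro h i
    have hi := congr($h (lp.single 2 i 1) i)
    simp only [comp_apply, hTT, id_apply, lp.single_apply_self, mul_one] at hi
    exact (pow_eq_one_iff_of_nonneg (norm_nonneg _) two_ne_zero).1 (by exact_mod_cast hi)
  · intro h
    ext g i
    simp [hTT, h]

end DiagonalOperators

theorem eq_of_hasSum_mul_pow {𝕜 : Type*} [NontriviallyNormedField 𝕜] {a b : ℕ → 𝕜} {F : 𝕜 → 𝕜}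
    (ha : ∀ᶠ z in nhds 0, HasSum (fun n => a n * z ^ n) (F z))
    (hb : ∀ᶠ z in nhds 0, HasSum (fun n => b n * z ^ n) (F z)) : a = b := by
  have hF : ∀ c : ℕ → 𝕜, (∀ᶠ z in nhds 0, HasSum (fun n => c n * z ^ n) (F z)) →
      HasFPowerSeriesAt F (FormalMultilinearSeries.ofScalars 𝕜 c) 0 := fun c hc => by
    rw [hasFPowerSeriesAt_iff]
    filter_upwards [hc] with z hz
    simpa [FormalMultilinearSeries.coeff_ofScalars, mul_comm] using hz
  exact FormalMultilinearSeries.ofScalars_series_injective 𝕜 𝕜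
    ((hF a ha).eq_formalMultilinearSeries (hF b hb))

namespace HE

variable {ζ : ℕ → ℝ}

theorem eventually_pow_le (hζ : ∀ n, 0 < ζ n)
    (hlim : Tendsto (fun n : ℕ => (ζ n) ^ ((1 : ℝ) / n)) atTop atTop) (B : ℝ) :
    ∀ᶠ n in atTop, B ^ n ≤ ζ n := by
  filter_upwards [hlim.eventually_ge_atTop |B|, eventually_ne_atTop 0] with n hn hn0
  calc B ^ n ≤ |B| ^ n := (le_abs_self _).trans (abs_pow B n).le
    _ ≤ (ζ n ^ ((1 : ℝ) / n)) ^ n := pow_le_pow_left₀ (abs_nonneg B) hn n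
    _ = ζ n := by
      rw [← Real.rpow_natCast, ← Real.rpow_mul (hζ n).le, one_div,
        inv_mul_cancel₀ (Nat.cast_ne_zero.2 hn0), Real.rpow_one]

theorem summable_pow_div (hζ : ∀ n, 0 < ζ n)
    (hlim : Tendsto (fun n : ℕ => (ζ n) ^ ((1 : ℝ) / n)) atTop atTop) (r : ℝ) :
    Summable fun n => r ^ n / ζ n := by
  refine .of_norm_bounded_eventually_nat summable_geometric_two
    ((eventually_pow_le hζ hlim (2 * |r| + 1)).mono fun n hn => ?_)
  have hB : 0 < 2 * |r| + 1 := by positivity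
  calc ‖r ^ n / ζ n‖ = |r| ^ n / ζ n := by
        rw [Real.norm_eq_abs, abs_div, abs_pow, abs_of_pos (hζ n)]
    _ ≤ |r| ^ n / (2 * |r| + 1) ^ n := div_le_div_of_nonneg_left (by positivity) (by positivity) hn
    _ = (|r| / (2 * |r| + 1)) ^ n := (div_pow _ _ _).symm
    _ ≤ (1 / 2) ^ n := pow_le_pow_left₀ (by positivity)
        (by rw [div_le_iff₀ hB]; linarith [abs_nonneg r]) n

theorem hasSum_toFun (hζ : ∀ n, 0 < ζ n)
    (hlim : Tendsto (fun n : ℕ => (ζ n) ^ ((1 : ℝ) / n)) atTop atTop) (f : HE ζ) (z : ℂ) :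
    HasSum (fun n => HE.coeff ζ f n * z ^ n) (HE.toFun ζ f z) := by
  refine Summable.hasSum (.of_norm_bounded ((summable_pow_div hζ hlim ‖z‖).mul_left ‖f‖)
    fun n => ?_)
  calc ‖HE.coeff ζ f n * z ^ n‖ = ‖f n‖ * ‖z‖ ^ n / ζ n := by
        rw [HE.coeff, norm_mul, norm_div, norm_pow, Complex.norm_real, Real.norm_eq_abs,
          abs_of_pos (hζ n), div_mul_eq_mul_div]
    _ ≤ ‖f‖ * (‖z‖ ^ n / ζ n) := by
        rw [← mul_div_assoc]
        gcongr
        · exact (hζ n).le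
        · exact lp.norm_apply_le_norm two_ne_zero f n

theorem apply_eq_of_toFun_eq (hζ : ∀ n, 0 < ζ n)
    (hlim : Tendsto (fun n : ℕ => (ζ n) ^ ((1 : ℝ) / n)) atTop atTop) {f g : HE ζ} {c ν : ℂ}
    (h : ∀ z, HE.toFun ζ g z = c * HE.toFun ζ f (ν * z)) (n : ℕ) :
    g n = c * ν ^ n * f n := by
  have hcoeff : HE.coeff ζ g = fun n => c * ν ^ n * HE.coeff ζ f n := by
    refine eq_of_hasSum_mul_pow (.of_forall (hasSum_toFun hζ hlim g)) (.of_forall fun z => ?_)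
    rw [h]
    exact ((hasSum_toFun hζ hlim f (ν * z)).mul_left c).congr_fun fun n => by ring
  have hζn : (ζ n : ℂ) ≠ 0 := Complex.ofReal_ne_zero.2 (hζ n).ne'
  have := congrFun hcoeff n
  simp only [HE.coeff] at this
  field_simp at this
  exact this

theorem toFun_zero (f : HE ζ) : HE.toFun ζ f 0 = f 0 / ζ 0 := by
  rw [HE.toFun, tsum_eq_single 0 fun n hn => by simp [zero_pow hn], HE.coeff]
  simp

theorem toFun_single_s13 (n : ℕ) (c z : ℂ) :
    HE.toFun ζ (lp.single 2 n c) z = c * z ^ n / ζ n := by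
  rw [HE.toFun, tsum_eq_single n fun m hm => by simp [HE.coeff, hm], HE.coeff,
    lp.single_apply_self]
  ring

theorem mul_conj_eq_one_of_comp_adjoint_eq_id (hζ0 : ζ 0 ≠ 0) {Υ : ℂ → ℂ} {ν : ℂ}
    {T : HE ζ →L[ℂ] HE ζ}
    (hT : ∀ f : HE ζ, ∀ z : ℂ, HE.toFun ζ (T f) z = Υ z * HE.toFun ζ f (ν * z))
    (hTT : T.comp (adjoint T) = ContinuousLinearMap.id ℂ (HE ζ)) (z : ℂ) :
    Υ z * conj (Υ 0) = 1 := by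
  have hζ0' : (ζ 0 : ℂ) ≠ 0 := Complex.ofReal_ne_zero.2 hζ0
  have hrow : ∀ g : HE ζ, T g 0 = Υ 0 * g 0 := fun g => by
    have := hT g 0
    rw [mul_zero, toFun_zero, toFun_zero] at this
    field_simp at this
    exact this
  have hT0 : T (lp.single 2 0 (conj (Υ 0))) = lp.single 2 0 1 := by
    rw [← lp.adjoint_single_of_apply_eq_mul T hrow]
    exact congr($hTT (lp.single 2 0 1))
  have := hT (lp.single 2 0 (conj (Υ 0))) z
  rw [hT0, toFun_single_s13, toFun_single_s13] at this
  field_simp at this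
  exact this.symm

theorem comp_adjoint_eq_id_iff_of_toFun_eq (hζ : ∀ n, 0 < ζ n)
    (hlim : Tendsto (fun n : ℕ => (ζ n) ^ ((1 : ℝ) / n)) atTop atTop) {c ν : ℂ}
    {T : HE ζ →L[ℂ] HE ζ}
    (hT : ∀ f : HE ζ, ∀ z : ℂ, HE.toFun ζ (T f) z = c * HE.toFun ζ f (ν * z)) :
    T.comp (adjoint T) = ContinuousLinearMap.id ℂ (HE ζ) ↔ ‖c‖ = 1 ∧ ‖ν‖ = 1 := by
  rw [lp.comp_adjoint_eq_id_iff_of_apply_eq_mul T fun f n =>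
    apply_eq_of_toFun_eq hζ hlim (hT f) n]
  simp only [norm_mul, norm_pow]
  refine ⟨fun h => ?_, fun ⟨hc, hν⟩ n => by simp [hc, hν]⟩
  have hc : ‖c‖ = 1 := by simpa using h 0
  exact ⟨hc, by simpa [hc] using h 1⟩

end HE

theorem weighted_composition_coisometry_iff_linear_symbol_general
    (ζ : ℕ → ℝ) (hζ : ∀ n, 0 < ζ n)
    (hlim : Tendsto (fun n : ℕ => (ζ n) ^ ((1 : ℝ) / n)) atTop atTop)
    (ν : ℂ)
    (Υ : ℂ → ℂ)
    (T : HE ζ →L[ℂ] HE ζ)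
    (hT : ∀ f : HE ζ, ∀ z : ℂ, HE.toFun ζ (T f) z = Υ z * HE.toFun ζ f (ν * z)) :
    T.comp (adjoint T) = ContinuousLinearMap.id ℂ (HE ζ) ↔
      (‖ν‖ = 1 ∧ (∀ z : ℂ, Υ z = (conj (Υ 0))⁻¹) ∧ ∀ z : ℂ, ‖Υ z‖ = 1) := by
  have hT_const : (∀ z, Υ z = (conj (Υ 0))⁻¹) → ∀ f : HE ζ, ∀ z : ℂ,
      HE.toFun ζ (T f) z = (conj (Υ 0))⁻¹ * HE.toFun ζ f (ν * z) := fun hΥ f z => by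
    rw [hT, hΥ]
  constructor
  · intro hTT
    have hΥ : ∀ z, Υ z = (conj (Υ 0))⁻¹ := fun z =>
      eq_inv_of_mul_eq_one_left (HE.mul_conj_eq_one_of_comp_adjoint_eq_id (hζ 0).ne' hT hTT z)
    obtain ⟨hc, hν⟩ := (HE.comp_adjoint_eq_id_iff_of_toFun_eq hζ hlim (hT_const hΥ)).1 hTT
    exact ⟨hν, hΥ, fun z => hΥ z ▸ hc⟩
  · rintro ⟨hν, hΥ, hΥ_norm⟩
    exact (HE.comp_adjoint_eq_id_iff_of_toFun_eq hζ hlim (hT_const hΥ)).2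
      ⟨hΥ 0 ▸ hΥ_norm 0, hν⟩

/-- For `Φ z = ν z` with `|ν| ≤ 1` and entire `Υ` with `C_{Υ,Φ}` bounded on `H_E(ζ)`:
`C_{Υ,Φ}` is a co-isometry iff `|ν| = 1` and `Υ` is the constant `1 / conj (Υ 0)`, of
modulus `1`. -/
theorem weighted_composition_coisometry_iff_linear_symbol
    (ζ : ℕ → ℝ) (hζ : ∀ n, 0 < ζ n)
    (hlim : Tendsto (fun n : ℕ => (ζ n) ^ ((1 : ℝ) / n)) atTop atTop)
    (ν : ℂ) (hν : ‖ν‖ ≤ 1)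
    (Υ : ℂ → ℂ) (hΥ : Differentiable ℂ Υ)
    (T : HE ζ →L[ℂ] HE ζ)
    (hT : ∀ f : HE ζ, ∀ z : ℂ, HE.toFun ζ (T f) z = Υ z * HE.toFun ζ f (ν * z)) :
    T.comp (adjoint T) = ContinuousLinearMap.id ℂ (HE ζ) ↔
      (‖ν‖ = 1 ∧ (∀ z : ℂ, Υ z = (conj (Υ 0))⁻¹) ∧ ∀ z : ℂ, ‖Υ z‖ = 1) :=
  weighted_composition_coisometry_iff_linear_symbol_general ζ hζ hlim ν Υ T hT
end
end

section
/- Let Φ(z) = νz − d with |ν| ≤ 1 and let Υ be an entire function on ℂ such that C_{Υ,Φ} is bounded on H_E(ζ). If C_{Υ,Φ} is a co-isometry, then Υ(z) = α K_{\bar{ν}d}(z)/‖K_{\bar{ν}d}‖ for all z ∈ ℂ, where α = 1/(\overline{Υ(0)} ‖K_{\bar{ν}d}‖) satisfies |α| = ζ₀, and |ν| = 1. -/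
open Filter ContinuousLinearMap
open scoped ComplexConjugate

noncomputable section

/-! Evaluating `T T⋆ = 1` on reproducing kernels, with `T⋆ K_z = conj (Υ z) • K_{Φ z}`, gives
`Υ z * conj (Υ w) * k (Φ z * conj (Φ w)) = k (z * conj w)` for the kernel function
`k s = ∑ sⁿ / ζₙ²`. Taking `w` to be the zero of `Φ` shows that `Υ` is a multiple of a kernel
function, and taking `w = 0` shows that `1 / Υ` is one as well. If `|ν| < 1`, comparing the two
gives `k (a x + b) = k x` with `0 ≤ a < 1` and `0 ≤ b`, which is impossible because `k` is strictly
increasing on `[0, ∞)`. Once `|ν| = 1` the zero of `Φ` is `conj ν * d`, and the identity at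
`z = w = 0` fixes the normalisation `|Υ 0| ‖K_{conj ν d}‖ = 1 / ζ₀`. -/

open scoped InnerProductSpace

/-- The fixed point `b / (1 - a)` of `x ↦ a * x + b` lies in `[0, ∞)`; just above it the
map moves points strictly to the left. -/
theorem StrictMonoOn.exists_apply_affine_ne {f : ℝ → ℝ} (hf : StrictMonoOn f (Set.Ici 0))
    {a b : ℝ} (ha₀ : 0 ≤ a) (ha₁ : a < 1) (hb : 0 ≤ b) :
    ∃ x, 0 ≤ x ∧ f (a * x + b) ≠ f x := by
  have h1a : 0 < 1 - a := by linarith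
  set x₀ := b / (1 - a)
  have hx₀ : 0 ≤ x₀ := div_nonneg hb h1a.le
  have hfix : a * (x₀ + 1) + b = x₀ + a := by
    simp only [x₀]
    field_simp
    ring
  refine ⟨x₀ + 1, by linarith, (hf ?_ ?_ ?_).ne⟩ <;> simp only [Set.mem_Ici, hfix] <;> linarith

namespace HE

/-- `kernel ζ (w * conj p)` is the value `K_p(w)` of the reproducing kernel. -/
def kernel (ζ : ℕ → ℝ) (s : ℂ) : ℂ := ∑' n, s ^ n / (ζ n : ℂ) ^ 2

def kernelReal (ζ : ℕ → ℝ) (x : ℝ) : ℝ := ∑' n, x ^ n / ζ n ^ 2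

section KernelFunction

variable {ζ : ℕ → ℝ}

/-- Eventually `ζ n ≥ (x + 2) ^ n`, so the terms are dominated by `2⁻ⁿ`. -/
theorem summable_pow_div_sq (hζ : ∀ n, 0 < ζ n)
    (hlim : Tendsto (fun n : ℕ => (ζ n) ^ ((1 : ℝ) / n)) atTop atTop)
    {x : ℝ} (hx : 0 ≤ x) : Summable (fun n : ℕ => x ^ n / ζ n ^ 2) := by
  refine Summable.of_norm_bounded_eventually_nat
    (summable_geometric_of_lt_one (by norm_num : (0 : ℝ) ≤ 1 / 2) (by norm_num)) ?_
  filter_upwards [hlim.eventually_ge_atTop (x + 2), eventually_ge_atTop 1] with n hroot hn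
  have hn0 : (n : ℝ) ≠ 0 := by exact_mod_cast Nat.one_le_iff_ne_zero.mp hn
  have hζn : (x + 2) ^ n ≤ ζ n := calc
    (x + 2) ^ n ≤ ((ζ n) ^ ((1 : ℝ) / n)) ^ n := pow_le_pow_left₀ (by positivity) hroot n
    _ = ζ n := by
      rw [← Real.rpow_natCast, ← Real.rpow_mul (hζ n).le, one_div, inv_mul_cancel₀ hn0,
        Real.rpow_one]
  have hζn2 : ((x + 2) ^ 2) ^ n ≤ ζ n ^ 2 := by
    rw [← pow_mul, mul_comm, pow_mul]
    exact pow_le_pow_left₀ (by positivity) hζn 2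
  have hratio : x / (x + 2) ^ 2 ≤ 1 / 2 := by
    rw [div_le_div_iff₀ (by positivity) (by norm_num)]
    nlinarith
  rw [Real.norm_of_nonneg (by have := hζ n; positivity)]
  calc x ^ n / ζ n ^ 2 ≤ x ^ n / ((x + 2) ^ 2) ^ n :=
        div_le_div_of_nonneg_left (by positivity) (by positivity) hζn2
    _ = (x / (x + 2) ^ 2) ^ n := (div_pow _ _ _).symm
    _ ≤ (1 / 2) ^ n := pow_le_pow_left₀ (by positivity) hratio n

theorem kernel_ofReal (ζ : ℕ → ℝ) (x : ℝ) : kernel ζ x = kernelReal ζ x := by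
  rw [kernel, kernelReal, Complex.ofReal_tsum]
  exact tsum_congr fun n => by push_cast; rfl

theorem kernelReal_zero (ζ : ℕ → ℝ) : kernelReal ζ 0 = (ζ 0 ^ 2)⁻¹ := by
  rw [kernelReal, tsum_eq_single 0 fun n hn => by simp [zero_pow hn]]
  simp

theorem kernelReal_pos (hζ : ∀ n, 0 < ζ n)
    (hlim : Tendsto (fun n : ℕ => (ζ n) ^ ((1 : ℝ) / n)) atTop atTop)
    {x : ℝ} (hx : 0 ≤ x) : 0 < kernelReal ζ x :=
  (summable_pow_div_sq hζ hlim hx).tsum_pos (fun n => by have := hζ n; positivity) 0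
    (by have := hζ 0; simp only [pow_zero, one_div]; positivity)

theorem strictMonoOn_kernelReal (hζ : ∀ n, 0 < ζ n)
    (hlim : Tendsto (fun n : ℕ => (ζ n) ^ ((1 : ℝ) / n)) atTop atTop) :
    StrictMonoOn (kernelReal ζ) (Set.Ici 0) := by
  intro x hx y hy hxy
  refine (summable_pow_div_sq hζ hlim hx).tsum_lt_tsum (i := 1)
    (fun n => by have := hζ n; gcongr) ?_ (summable_pow_div_sq hζ hlim hy)
  have := hζ 1
  simpa using div_lt_div_of_pos_right hxy (by positivity)

theorem kernel_ofReal_ne_zero (hζ : ∀ n, 0 < ζ n)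
    (hlim : Tendsto (fun n : ℕ => (ζ n) ^ ((1 : ℝ) / n)) atTop atTop)
    {x : ℝ} (hx : 0 ≤ x) : kernel ζ x ≠ 0 := by
  rw [kernel_ofReal]
  exact_mod_cast (kernelReal_pos hζ hlim hx).ne'

theorem kernel_zero_ne_zero (hζ : ∀ n, 0 < ζ n) : kernel ζ 0 ≠ 0 := by
  rw [← Complex.ofReal_zero, kernel_ofReal, kernelReal_zero]
  exact_mod_cast inv_ne_zero (pow_pos (hζ 0) 2).ne'

end KernelFunction

def IsKernel (ζ : ℕ → ℝ) (K : ℂ → HE ζ) : Prop :=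
  ∀ p n, coeff ζ (K p) n = (conj p) ^ n / (ζ n : ℂ) ^ 2

section ReproducingKernel

variable {ζ : ℕ → ℝ} {K : ℂ → HE ζ}

theorem IsKernel.apply (hζ : ∀ n, 0 < ζ n) (hK : IsKernel ζ K) (p : ℂ) (n : ℕ) :
    K p n = conj p ^ n / (ζ n : ℂ) := by
  have hζn : (ζ n : ℂ) ≠ 0 := Complex.ofReal_ne_zero.2 (hζ n).ne'
  have h := hK p n
  rw [coeff, div_eq_iff hζn] at h
  rw [h, pow_two, ← div_div, div_mul_cancel₀ _ hζn]

theorem IsKernel.toFun_eq (hK : IsKernel ζ K) (p z : ℂ) :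
    toFun ζ (K p) z = kernel ζ (z * conj p) :=
  tsum_congr fun n => by rw [hK, mul_pow]; ring

theorem IsKernel.inner_left (hζ : ∀ n, 0 < ζ n) (hK : IsKernel ζ K) (p : ℂ) (f : HE ζ) :
    ⟪K p, f⟫_ℂ = toFun ζ f p := by
  rw [lp.inner_eq_tsum, toFun]
  refine tsum_congr fun n => ?_
  rw [RCLike.inner_apply, hK.apply hζ, coeff, map_div₀, map_pow, Complex.conj_conj,
    Complex.conj_ofReal]
  ring

theorem IsKernel.inner_eq (hζ : ∀ n, 0 < ζ n) (hK : IsKernel ζ K) (p q : ℂ) :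
    ⟪K p, K q⟫_ℂ = kernel ζ (p * conj q) := by
  rw [hK.inner_left hζ, hK.toFun_eq]

theorem IsKernel.norm_sq (hζ : ∀ n, 0 < ζ n) (hK : IsKernel ζ K) (p : ℂ) :
    ‖K p‖ ^ 2 = kernelReal ζ (Complex.normSq p) := by
  have h := hK.inner_eq hζ p p
  rw [Complex.mul_conj, kernel_ofReal, inner_self_eq_norm_sq_to_K] at h
  exact Complex.ofReal_injective (by simpa using h)

end ReproducingKernel

/-- The identity `⟪T⋆K_z, T⋆K_w⟫ = ⟪K_z, K_w⟫` satisfied by a co-isometric weighted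
composition operator `T = C_{Υ,Φ}`. -/
def PreservesKernel (ζ : ℕ → ℝ) (Υ Φ : ℂ → ℂ) : Prop :=
  ∀ z w, Υ z * conj (Υ w) * kernel ζ (Φ z * conj (Φ w)) = kernel ζ (z * conj w)

section WeightedComposition

variable {ζ : ℕ → ℝ} {K : ℂ → HE ζ} {Υ Φ : ℂ → ℂ} {T : HE ζ →L[ℂ] HE ζ}

theorem IsKernel.adjoint_apply (hζ : ∀ n, 0 < ζ n) (hK : IsKernel ζ K)
    (hT : ∀ f z, toFun ζ (T f) z = Υ z * toFun ζ f (Φ z)) (z : ℂ) :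
    adjoint T (K z) = conj (Υ z) • K (Φ z) := by
  refine ext_inner_right ℂ fun f => ?_
  rw [adjoint_inner_left, inner_smul_left, Complex.conj_conj, hK.inner_left hζ,
    hK.inner_left hζ, hT]

theorem IsKernel.preservesKernel_of_coisometry (hζ : ∀ n, 0 < ζ n) (hK : IsKernel ζ K)
    (hT : ∀ f z, toFun ζ (T f) z = Υ z * toFun ζ f (Φ z))
    (hco : T.comp (adjoint T) = ContinuousLinearMap.id ℂ (HE ζ)) :
    PreservesKernel ζ Υ Φ := by
  intro z w
  have h : ⟪adjoint T (K z), adjoint T (K w)⟫_ℂ = ⟪K z, K w⟫_ℂ := by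
    rw [adjoint_inner_left, ← comp_apply, hco, id_apply]
  rw [hK.adjoint_apply hζ hT, hK.adjoint_apply hζ hT, inner_smul_left, inner_smul_right,
    Complex.conj_conj, hK.inner_eq hζ, hK.inner_eq hζ] at h
  rw [← h]
  ring

end WeightedComposition

/-- For constant `Φ` the left side of the identity is a rank-one kernel in `(z, w)`, so its
`2 × 2` minors vanish; this would force `kernel ζ 1 = kernel ζ 0`. -/
theorem not_preservesKernel_const {ζ : ℕ → ℝ} {Υ : ℂ → ℂ} (hζ : ∀ n, 0 < ζ n)
    (hlim : Tendsto (fun n : ℕ => (ζ n) ^ ((1 : ℝ) / n)) atTop atTop) (c : ℂ) :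
    ¬ PreservesKernel ζ Υ (fun _ => c) := by
  intro h
  have hminor : kernel ζ 1 * kernel ζ 0 = kernel ζ 0 * kernel ζ 0 := by
    have h11 := h 1 1
    have h00 := h 0 0
    have h10 := h 1 0
    have h01 := h 0 1
    simp only [map_one, map_zero, mul_one, mul_zero] at h11 h00 h10 h01
    linear_combination congr($h10 * $h01) - congr($h11 * $h00)
  have h10 := mul_right_cancel₀ (kernel_zero_ne_zero hζ) hminor
  rw [← Complex.ofReal_one, ← Complex.ofReal_zero, kernel_ofReal, kernel_ofReal] at h10
  exact (strictMonoOn_kernelReal hζ hlim Set.self_mem_Ici (Set.mem_Ici.2 zero_le_one)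
    one_pos).ne' (by exact_mod_cast h10)

namespace PreservesKernel

variable {ζ : ℕ → ℝ} {Υ Φ : ℂ → ℂ}

theorem normSq_mul_kernelReal (h : PreservesKernel ζ Υ Φ) :
    Complex.normSq (Υ 0) * kernelReal ζ (Complex.normSq (Φ 0)) = (ζ 0 ^ 2)⁻¹ := by
  have h00 := h 0 0
  rw [Complex.mul_conj, Complex.mul_conj, zero_mul, ← Complex.ofReal_zero, kernel_ofReal,
    kernel_ofReal, kernelReal_zero] at h00
  exact_mod_cast h00

theorem kernel_eq_of_map_zero (h : PreservesKernel ζ Υ Φ) (hζ : ∀ n, 0 < ζ n) (hΦ : Φ 0 = 0)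
    (z w : ℂ) : kernel ζ (Φ z * conj (Φ w)) = kernel ζ (z * conj w) := by
  have hunit : ∀ z, Υ z * conj (Υ 0) = 1 := fun z => by
    have hz := h z 0
    rw [hΦ, map_zero, mul_zero, mul_zero] at hz
    exact mul_right_cancel₀ (kernel_zero_ne_zero hζ) (hz.trans (one_mul _).symm)
  have hw : conj (Υ w) * Υ 0 = 1 := by simpa using congrArg conj (hunit w)
  have hzw : Υ z * conj (Υ w) = 1 := by
    linear_combination (-(Υ z * conj (Υ w))) * hunit 0 + (conj (Υ w) * Υ 0) * hunit z + hw
  rw [← h z w, hzw, one_mul]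

variable {ν d : ℂ}

/-- Both `Υ z * kernel ζ 0` (through the zero `d / ν` of `Φ`) and `1 / Υ z` (through `Φ 0`) are
multiples of kernel functions; eliminating `Υ` and writing `s = z * conj (d / ν)` gives
the identity. -/
theorem kernel_mul_kernel_eq (h : PreservesKernel ζ Υ (fun z => ν * z - d))
    (hζ : ∀ n, 0 < ζ n) (hν : ν ≠ 0) (hd : d ≠ 0) (s : ℂ) :
    kernel ζ s * kernel ζ (Complex.normSq d - Complex.normSq ν * s) =
      kernel ζ 0 * kernel ζ (Complex.normSq d) := by
  set w₀ := d / ν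
  have hw₀ : conj w₀ ≠ 0 := by simp [w₀, hν, hd]
  have hΦw₀ : ν * w₀ - d = 0 := by rw [mul_div_cancel₀ _ hν, sub_self]
  have hA : ∀ z, Υ z * conj (Υ w₀) * kernel ζ 0 = kernel ζ (z * conj w₀) := fun z => by
    simpa [hΦw₀] using h z w₀
  have hB : ∀ z, Υ z * conj (Υ 0) * kernel ζ (Complex.normSq d - ν * conj d * z) =
      kernel ζ 0 := fun z => by
    have hz := h z 0
    beta_reduce at hz
    rw [map_zero, mul_zero, mul_zero, zero_sub, map_neg] at hz
    rw [← Complex.mul_conj, show d * conj d - ν * conj d * z = (ν * z - d) * -conj d by ring]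
    exact hz
  have hΥ0 : conj (Υ 0) ≠ 0 := fun h0 =>
    kernel_zero_ne_zero hζ (by simpa [h0] using (hB 0).symm)
  have helim : ∀ z, kernel ζ (z * conj w₀) * kernel ζ (Complex.normSq d - ν * conj d * z) =
      conj (Υ w₀) * kernel ζ 0 * kernel ζ 0 / conj (Υ 0) := fun z => by
    rw [eq_div_iff hΥ0, ← hA z]
    linear_combination conj (Υ w₀) * kernel ζ 0 * hB z
  have h0 := helim 0
  simp only [zero_mul, mul_zero, sub_zero] at h0
  have hs := helim (s / conj w₀)
  rw [← h0, div_mul_cancel₀ _ hw₀] at hs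
  have hd' : conj d ≠ 0 := by simpa using hd
  convert hs using 3
  simp only [w₀, map_div₀, ← Complex.mul_conj]
  field_simp

theorem kernel_affine_eq (h : PreservesKernel ζ Υ (fun z => ν * z - d))
    (hζ : ∀ n, 0 < ζ n) (hlim : Tendsto (fun n : ℕ => (ζ n) ^ ((1 : ℝ) / n)) atTop atTop)
    (hν : ν ≠ 0) (hd : d ≠ 0) (s : ℂ) :
    kernel ζ (Complex.normSq ν ^ 2 * s + (1 - Complex.normSq ν) * Complex.normSq d) =
      kernel ζ s := by
  have hP := h.kernel_mul_kernel_eq hζ hν hd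
  set m : ℂ := (Complex.normSq ν : ℂ)
  set R : ℂ := (Complex.normSq d : ℂ)
  have hC : kernel ζ 0 * kernel ζ R ≠ 0 :=
    mul_ne_zero (kernel_zero_ne_zero hζ)
      (kernel_ofReal_ne_zero hζ hlim (Complex.normSq_nonneg d))
  have hne : kernel ζ (R - m * s) ≠ 0 := right_ne_zero_of_mul (hP s ▸ hC)
  refine mul_left_cancel₀ hne ?_
  rw [mul_comm _ (kernel ζ s), hP s, ← hP (R - m * s)]
  ring_nf

theorem norm_eq_one (h : PreservesKernel ζ Υ (fun z => ν * z - d))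
    (hζ : ∀ n, 0 < ζ n) (hlim : Tendsto (fun n : ℕ => (ζ n) ^ ((1 : ℝ) / n)) atTop atTop)
    (hν : ‖ν‖ ≤ 1) : ‖ν‖ = 1 := by
  have hν0 : ν ≠ 0 := by
    rintro rfl
    exact not_preservesKernel_const hζ hlim (-d) (by simpa using h)
  by_contra hne
  set m := Complex.normSq ν
  have hm₀ : 0 ≤ m := Complex.normSq_nonneg ν
  have hm₁ : m < 1 := by
    have hm : m = ‖ν‖ ^ 2 := Complex.normSq_eq_norm_sq ν
    nlinarith [norm_nonneg ν, lt_of_le_of_ne hν hne]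
  obtain ⟨a, b, ha₀, ha₁, hb, hab⟩ : ∃ a b : ℝ, 0 ≤ a ∧ a < 1 ∧ 0 ≤ b ∧
      ∀ x : ℝ, kernel ζ ↑(a * x + b) = kernel ζ x := by
    rcases eq_or_ne d 0 with rfl | hd
    · refine ⟨m, 0, hm₀, hm₁, le_rfl, fun x => ?_⟩
      have := h.kernel_eq_of_map_zero hζ (by simp) x 1
      rw [map_one, mul_one, sub_zero, sub_zero, mul_one, mul_right_comm,
        Complex.mul_conj] at this
      simpa [mul_comm] using this
    · refine ⟨m ^ 2, (1 - m) * Complex.normSq d, by positivity, by nlinarith,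
        mul_nonneg (by linarith) (Complex.normSq_nonneg d), fun x => ?_⟩
      push_cast
      exact h.kernel_affine_eq hζ hlim hν0 hd x
  obtain ⟨x, hx, hfx⟩ :=
    StrictMonoOn.exists_apply_affine_ne (strictMonoOn_kernelReal hζ hlim) ha₀ ha₁ hb
  exact hfx (Complex.ofReal_injective (by rw [← kernel_ofReal, ← kernel_ofReal, hab]))

theorem apply_eq (h : PreservesKernel ζ Υ (fun z => ν * z - d)) (hζ : ∀ n, 0 < ζ n)
    (hν : ‖ν‖ = 1) (z : ℂ) :
    Υ z = (conj (Υ 0) * kernel ζ (Complex.normSq d))⁻¹ * kernel ζ (z * conj (conj ν * d)) := by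
  set p := conj ν * d
  have hp : ν * p - d = 0 := by
    rw [← mul_assoc, Complex.mul_conj, Complex.normSq_eq_norm_sq, hν]
    simp
  have hzp := h z p
  have hp0 := h p 0
  have h00 := h 0 0
  beta_reduce at hzp hp0 h00
  rw [hp, map_zero, mul_zero] at hzp
  rw [hp, zero_mul, map_zero, mul_zero] at hp0
  rw [mul_zero, zero_sub, map_neg, neg_mul_neg, Complex.mul_conj d, map_zero, mul_zero] at h00
  have hp0' : conj (Υ p) * Υ 0 = 1 := by
    have := mul_right_cancel₀ (kernel_zero_ne_zero hζ) (hp0.trans (one_mul _).symm)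
    simpa using congrArg conj this
  have hne : conj (Υ 0) * kernel ζ (Complex.normSq d) ≠ 0 := fun h0 =>
    kernel_zero_ne_zero hζ (by rw [← h00, mul_assoc, h0, mul_zero])
  rw [eq_inv_mul_iff_mul_eq₀ hne, ← hzp]
  linear_combination
    (Υ z * conj (Υ p)) * h00 - (Υ z * conj (Υ 0) * kernel ζ (Complex.normSq d)) * hp0'

end PreservesKernel

end HE

theorem weighted_composition_coisometry_necessary_general
    (ζ : ℕ → ℝ) (hζ : ∀ n, 0 < ζ n)
    (hlim : Tendsto (fun n : ℕ => (ζ n) ^ ((1 : ℝ) / n)) atTop atTop)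
    (ν d : ℂ) (hν : ‖ν‖ ≤ 1)
    (Υ : ℂ → ℂ)
    (K : ℂ → HE ζ) (hK : ∀ p n, HE.coeff ζ (K p) n = (conj p) ^ n / (ζ n : ℂ) ^ 2)
    (T : HE ζ →L[ℂ] HE ζ)
    (hT : ∀ f : HE ζ, ∀ z : ℂ, HE.toFun ζ (T f) z = Υ z * HE.toFun ζ f (ν * z - d)) :
    T.comp (adjoint T) = ContinuousLinearMap.id ℂ (HE ζ) →
      ((∀ z : ℂ, Υ z = (conj (Υ 0) * (‖K (conj ν * d)‖ : ℂ))⁻¹ *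
          (HE.toFun ζ (K (conj ν * d)) z / (‖K (conj ν * d)‖ : ℂ))) ∧
       ‖(conj (Υ 0) * (‖K (conj ν * d)‖ : ℂ))⁻¹‖ = ζ 0 ∧
       ‖ν‖ = 1) := by
  intro hco
  have hK' : HE.IsKernel ζ K := hK
  have h : HE.PreservesKernel ζ Υ (fun z => ν * z - d) :=
    hK'.preservesKernel_of_coisometry hζ hT hco
  have hν₁ := h.norm_eq_one hζ hlim hν
  have hKp : ‖K (conj ν * d)‖ ^ 2 = HE.kernelReal ζ (Complex.normSq d) := by
    rw [hK'.norm_sq hζ, Complex.normSq_mul, Complex.normSq_conj, Complex.normSq_eq_norm_sq ν,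
      hν₁, one_pow, one_mul]
  have hα : ‖conj (Υ 0) * (‖K (conj ν * d)‖ : ℂ)‖ = (ζ 0)⁻¹ := by
    have h₀ := h.normSq_mul_kernelReal
    rw [mul_zero, zero_sub, Complex.normSq_neg, ← hKp, Complex.normSq_eq_norm_sq, ← mul_pow,
      ← inv_pow] at h₀
    rw [norm_mul, RCLike.norm_conj, Complex.norm_real, norm_norm]
    exact (pow_left_inj₀ (by positivity) (inv_nonneg.2 (hζ 0).le) two_ne_zero).1 h₀
  refine ⟨fun z => ?_, by rw [norm_inv, hα, inv_inv], hν₁⟩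
  have hα₀ : conj (Υ 0) * (‖K (conj ν * d)‖ : ℂ) ≠ 0 :=
    norm_ne_zero_iff.1 (hα ▸ inv_ne_zero (hζ 0).ne')
  rw [h.apply_eq hζ hν₁ z, hK'.toFun_eq, HE.kernel_ofReal, ← hKp]
  field_simp
  push_cast
  ring

/-- For `Φ z = ν z - d` with `|ν| ≤ 1` and entire `Υ` with `C_{Υ,Φ}` bounded on `H_E(ζ)`:
if `C_{Υ,Φ}` is a co-isometry then `Υ z = α K_{conj ν * d} z / ‖K_{conj ν * d}‖` for all
`z`, where `α = 1 / (conj (Υ 0) ‖K_{conj ν * d}‖)` satisfies `|α| = ζ₀`, and `|ν| = 1`. -/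
theorem weighted_composition_coisometry_necessary
    (ζ : ℕ → ℝ) (hζ : ∀ n, 0 < ζ n)
    (hlim : Tendsto (fun n : ℕ => (ζ n) ^ ((1 : ℝ) / n)) atTop atTop)
    (ν d : ℂ) (hν : ‖ν‖ ≤ 1)
    (Υ : ℂ → ℂ) (hΥ : Differentiable ℂ Υ)
    (K : ℂ → HE ζ) (hK : ∀ p n, HE.coeff ζ (K p) n = (conj p) ^ n / (ζ n : ℂ) ^ 2)
    (T : HE ζ →L[ℂ] HE ζ)
    (hT : ∀ f : HE ζ, ∀ z : ℂ, HE.toFun ζ (T f) z = Υ z * HE.toFun ζ f (ν * z - d)) :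
    T.comp (adjoint T) = ContinuousLinearMap.id ℂ (HE ζ) →
      ((∀ z : ℂ, Υ z = (conj (Υ 0) * (‖K (conj ν * d)‖ : ℂ))⁻¹ *
          (HE.toFun ζ (K (conj ν * d)) z / (‖K (conj ν * d)‖ : ℂ))) ∧
       ‖(conj (Υ 0) * (‖K (conj ν * d)‖ : ℂ))⁻¹‖ = ζ 0 ∧
       ‖ν‖ = 1) :=
  weighted_composition_coisometry_necessary_general ζ hζ hlim ν d hν Υ K hK T hT
end
end
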